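/- arXiv:2406.11008 — 3 statements merged into one kernel-verified Lean document; each statement's English description precedes it below -/
import Mathlib

section
/- Let n ≥ 1 and for each i : Fin n let α i be a nonempty finite type and τ i a matrix in Matrix (α i) (α i) ℂ. Then the trace norm of the n-fold tensor product satisfies ‖⨂_i τ i‖₁ = ∏ i, ‖τ i‖₁. -/
open Matrix BigOperators
open scoped ComplexOrder

/-- The `n`-fold tensor (Kronecker) product of matrices `M i : Matrix (α i) (α i) ℂ`,
indexed by `Π i, α i`, with entries `∏ i, M i (x i) (y i)`. -/
def tensorPow {n : ℕ} {α : Fin n → Type*} [∀ i, Fintype (α i)]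
    (M : ∀ i, Matrix (α i) (α i) ℂ) : Matrix (∀ i, α i) (∀ i, α i) ℂ :=
  Matrix.of fun x y => ∏ i, M i (x i) (y i)

/-- The trace norm of a square complex matrix: the trace of the positive semidefinite
square root of `Aᴴ * A`. -/
noncomputable def traceNorm {α : Type*} [Fintype α] [DecidableEq α]
    (A : Matrix α α ℂ) : ℝ :=
  (((Matrix.posSemidef_conjTranspose_mul_self A).1.eigenvectorUnitary : Matrix α α ℂ) *
      diagonal (((↑) : ℝ → ℂ) ∘ Real.sqrt ∘ (Matrix.posSemidef_conjTranspose_mul_self A).1.eigenvalues) *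
      (star (Matrix.posSemidef_conjTranspose_mul_self A).1.eigenvectorUnitary : Matrix α α ℂ)).trace.re

/-!
The Kronecker product is multiplicative and commutes with `ᴴ`, so
`(⨂ τ i)ᴴ (⨂ τ i) = ⨂ (τ i)ᴴ τ i`, and a Kronecker product of positive semidefinite matrices
is again positive semidefinite (`⨂ Bᴴ B = (⨂ B)ᴴ (⨂ B)`). By uniqueness of positive square
roots, `√((⨂ τ i)ᴴ (⨂ τ i)) = ⨂ √((τ i)ᴴ τ i)`, and the trace of a Kronecker product is the
product of the traces.
-/

open scoped MatrixOrder

section TraceNorm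

variable {α : Type*} [Fintype α]

lemma Matrix.IsHermitian.ofReal_re_trace {A : Matrix α α ℂ} (hA : A.IsHermitian) :
    (A.trace.re : ℂ) = A.trace :=
  Complex.conj_eq_iff_re.mp (by rw [starRingEnd_apply, ← trace_conjTranspose, hA.eq])

variable [DecidableEq α]

lemma traceNorm_eq_re_trace_sqrt (A : Matrix α α ℂ) :
    traceNorm A = (CFC.sqrt (Aᴴ * A)).trace.re := by
  have hA := posSemidef_conjTranspose_mul_self A
  rw [CFC.sqrt_eq_cfc, cfc_nnreal_eq_real _ _ hA.nonneg, hA.1.cfc_eq, IsHermitian.cfc,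
    Unitary.conjStarAlgAut_apply, traceNorm]
  congr 4
  ext i j
  simp only [diagonal_apply]
  split_ifs with h
  · subst h
    simp [max_eq_left (hA.eigenvalues_nonneg i)]
  · rfl

lemma ofReal_traceNorm (A : Matrix α α ℂ) :
    (traceNorm A : ℂ) = (CFC.sqrt (Aᴴ * A)).trace := by
  have hS : (CFC.sqrt (Aᴴ * A)).PosSemidef := (CFC.sqrt_nonneg _).posSemidef
  rw [traceNorm_eq_re_trace_sqrt, hS.1.ofReal_re_trace]

end TraceNorm

section TensorPow

variable {n : ℕ} {α : Fin n → Type*} [∀ i, Fintype (α i)]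

lemma tensorPow_mul (M N : ∀ i, Matrix (α i) (α i) ℂ) :
    tensorPow M * tensorPow N = tensorPow fun i => M i * N i := by
  ext x y
  simp only [tensorPow, mul_apply, of_apply]
  rw [Fintype.prod_sum fun i j => M i (x i) j * N i j (y i)]
  simp [Finset.prod_mul_distrib]

lemma tensorPow_conjTranspose (M : ∀ i, Matrix (α i) (α i) ℂ) :
    (tensorPow M)ᴴ = tensorPow fun i => (M i)ᴴ := by
  ext x y
  simp [tensorPow, conjTranspose_apply]

lemma tensorPow_conjTranspose_mul_self (M : ∀ i, Matrix (α i) (α i) ℂ) :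
    (tensorPow M)ᴴ * tensorPow M = tensorPow fun i => (M i)ᴴ * M i := by
  rw [tensorPow_conjTranspose, tensorPow_mul]

lemma trace_tensorPow (M : ∀ i, Matrix (α i) (α i) ℂ) :
    (tensorPow M).trace = ∏ i, (M i).trace := by
  simp only [trace, diag, tensorPow, of_apply]
  exact (Fintype.prod_sum fun i j => M i j j).symm

lemma tensorPow_nonneg {M : ∀ i, Matrix (α i) (α i) ℂ} (hM : ∀ i, 0 ≤ M i) :
    0 ≤ tensorPow M := by
  classical
  choose B hB using fun i => CStarAlgebra.nonneg_iff_eq_star_mul_self.mp (hM i)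
  rw [CStarAlgebra.nonneg_iff_eq_star_mul_self]
  refine ⟨tensorPow B, ?_⟩
  rw [star_eq_conjTranspose, tensorPow_conjTranspose_mul_self]
  exact congrArg tensorPow (funext hB)

lemma sqrt_tensorPow [∀ i, DecidableEq (α i)] {M : ∀ i, Matrix (α i) (α i) ℂ}
    (hM : ∀ i, 0 ≤ M i) :
    CFC.sqrt (tensorPow M) = tensorPow fun i => CFC.sqrt (M i) := by
  refine (CFC.sqrt_eq_iff _ _ (tensorPow_nonneg hM)
    (tensorPow_nonneg fun i => CFC.sqrt_nonneg _)).mpr ?_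
  rw [tensorPow_mul]
  exact congrArg tensorPow (funext fun i => CFC.sqrt_mul_sqrt_self _ (hM i))

end TensorPow

theorem stmt1_general {n : ℕ} (α : Fin n → Type*) [∀ i, Fintype (α i)]
    [∀ i, DecidableEq (α i)]
    (τ : ∀ i, Matrix (α i) (α i) ℂ) :
    traceNorm (tensorPow τ) = ∏ i, traceNorm (τ i) := by
  apply Complex.ofReal_injective
  rw [Complex.ofReal_prod, ofReal_traceNorm, tensorPow_conjTranspose_mul_self,
    sqrt_tensorPow fun i => (posSemidef_conjTranspose_mul_self (τ i)).nonneg, trace_tensorPow]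
  simp only [ofReal_traceNorm]

theorem stmt1 {n : ℕ} (hn : 1 ≤ n) (α : Fin n → Type*) [∀ i, Fintype (α i)]
    [∀ i, DecidableEq (α i)] [∀ i, Nonempty (α i)]
    (τ : ∀ i, Matrix (α i) (α i) ℂ) :
    traceNorm (tensorPow τ) = ∏ i, traceNorm (τ i) :=
  stmt1_general α τ
end

section
/- For all bits a₁, b₁, a₂, b₂ ∈ {0,1} there exists a global phase c : ℂ with ‖c‖ = 1 such that CNOT · ((X^{a₁} · Z^{b₁}) ⊗ₖ (X^{a₂} · Z^{b₂})) = c • (((X^{a₁} · Z^{b₁ ⊕ b₂}) ⊗ₖ (X^{a₁ ⊕ a₂} · Z^{b₂})) · CNOT), where ⊕ denotes XOR of bits. -/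
open Matrix Kronecker

noncomputable section

/-- The Pauli X gate. -/
def X : Matrix (Fin 2) (Fin 2) ℂ := !![0, 1; 1, 0]

/-- The Pauli Z gate. -/
def Z : Matrix (Fin 2) (Fin 2) ℂ := !![1, 0; 0, -1]

/-- XOR of two bits (addition in `Fin 2` is addition mod 2). -/
def bxor (a b : Fin 2) : Fin 2 := a + b

/-- The CNOT gate: maps the basis vector `|x, y⟩` to `|x, x ⊕ y⟩`; its
entry at `((x, y), (x', y'))` is `1` if `x = x'` and `y = x' ⊕ y'`, else `0`. -/
def CNOT : Matrix (Fin 2 × Fin 2) (Fin 2 × Fin 2) ℂ :=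
  Matrix.of fun p q => if p.1 = q.1 ∧ p.2 = bxor q.1 q.2 then 1 else 0

set_option maxHeartbeats 1600000 in
theorem stmt10 (a₁ b₁ a₂ b₂ : Fin 2) :
    ∃ c : ℂ, ‖c‖ = 1 ∧
      CNOT * ((X ^ (a₁ : ℕ) * Z ^ (b₁ : ℕ)) ⊗ₖ (X ^ (a₂ : ℕ) * Z ^ (b₂ : ℕ))) =
        c • (((X ^ (a₁ : ℕ) * Z ^ ((bxor b₁ b₂ : Fin 2) : ℕ)) ⊗ₖ
              (X ^ ((bxor a₁ a₂ : Fin 2) : ℕ) * Z ^ (b₂ : ℕ))) * CNOT) := by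
  refine ⟨1, by norm_num, ?_⟩
  rw [one_smul]
  fin_cases a₁ <;> fin_cases b₁ <;> fin_cases a₂ <;> fin_cases b₂ <;>
    · ext ⟨i,j⟩ ⟨k,l⟩
      fin_cases i <;> fin_cases j <;> fin_cases k <;> fin_cases l <;>
        simp (config := { decide := true }) [CNOT, X, Z, bxor, Matrix.mul_apply,
          Fintype.sum_prod_type, Fin.sum_univ_two, kroneckerMap_apply,
          Matrix.one_apply, Prod.ext_iff]

end
end

section
/- Gate teleportation identity: for every ψ : Fin 2 → ℂ and every matrix G : Matrix (Fin 2) (Fin 2) ℂ, the three-qubit vector (x, y, z) ↦ ψ x · ((1 ⊗ G) applied to Φ₀₀) y z — concretely (x, y, z) ↦ ψ x · (1/√2) · G z y — equals the vector (x, y, z) ↦ (1/2) · ∑_{a,b ∈ Fin 2} Φ_{ab} x y · ((G · X^b · Z^a) ψ) z, where a matrix M acts on ψ : Fin 2 → ℂ by (M ψ) z = ∑ w, M z w · ψ w. In particular, teleporting ψ through the gate-twisted EPR pair (1 ⊗ G) Φ₀₀ with Bell outcome (a,b) leaves the receiver with the state G (X^b Z^a ψ). -/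
open Matrix BigOperators

noncomputable section

/-- The Bell state `Φ_{ab}`: `Φ_{ab} x y = (1/√2) · (−1)^{a·x}` if `y = x ⊕ b`, else `0`.
In particular `Bell 0 0` is the EPR state. -/
def Bell (a b : Fin 2) : Fin 2 → Fin 2 → ℂ := fun x y =>
  if y = bxor x b then (1 / (Real.sqrt 2 : ℂ)) * (-1) ^ ((a : ℕ) * (x : ℕ)) else 0

theorem stmt13 (ψ : Fin 2 → ℂ) (G : Matrix (Fin 2) (Fin 2) ℂ) (x y z : Fin 2) :
    ψ x * ((1 / (Real.sqrt 2 : ℂ)) * G z y) =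
      (1 / 2 : ℂ) * ∑ a : Fin 2, ∑ b : Fin 2,
        Bell a b x y * ((G * X ^ (b : ℕ) * Z ^ (a : ℕ)).mulVec ψ) z := by
  have h2 : (Real.sqrt 2 : ℂ) * (Real.sqrt 2 : ℂ) = 2 := by
    rw [← Complex.ofReal_mul, Real.mul_self_sqrt (by norm_num)]
    norm_num
  have hne : (Real.sqrt 2 : ℂ) ≠ 0 := by
    intro h; rw [h, mul_zero] at h2; norm_num at h2
  fin_cases x <;> fin_cases y <;>
    simp [Bell, bxor, X, Z, mulVec, dotProduct, Fin.sum_univ_two, mul_apply, pow_succ] <;>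
    field_simp <;> ring_nf

end
end
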